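/- (Conservation law with instantaneous information) Let (X^n, Y^n) be jointly distributed random sequences with finite alphabets. Then I(X^n→Y^n) + I(Y^n→X^n) = I(X^n; Y^n) + I(X^n→Y^n‖DX^n). -/

import Mathlib

open Finset

noncomputable section

-- Probability of the event `E` under the pmf `p` on a finite sample space `Ω`.
open Classical in
def pr {Ω : Type*} [Fintype Ω] (p : Ω → ℝ) (E : Ω → Prop) : ℝ :=
  ∑ ω, if E ω then p ω else 0

-- Shannon entropy `H(U)` (pointwise form).
def entropy {Ω α : Type*} [Fintype Ω] (p : Ω → ℝ) (U : Ω → α) : ℝ :=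
  -∑ ω, p ω * Real.log (pr p (fun ω' => U ω' = U ω))

-- Conditional Shannon entropy `H(U | V)`.
def condEntropy {Ω α β : Type*} [Fintype Ω] (p : Ω → ℝ) (U : Ω → α) (V : Ω → β) : ℝ :=
  -∑ ω, p ω * Real.log
      (pr p (fun ω' => U ω' = U ω ∧ V ω' = V ω) / pr p (fun ω' => V ω' = V ω))

-- Mutual information `I(U ; V)`.
def mutualInfo {Ω α β : Type*} [Fintype Ω] (p : Ω → ℝ) (U : Ω → α) (V : Ω → β) : ℝ :=
  ∑ ω, p ω * Real.log
      (pr p (fun ω' => U ω' = U ω ∧ V ω' = V ω) /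
        (pr p (fun ω' => U ω' = U ω) * pr p (fun ω' => V ω' = V ω)))

-- Conditional mutual information `I(U ; V | W)`.
def condMutualInfo {Ω α β γ : Type*} [Fintype Ω] (p : Ω → ℝ)
    (U : Ω → α) (V : Ω → β) (W : Ω → γ) : ℝ :=
  ∑ ω, p ω * Real.log
      ((pr p (fun ω' => U ω' = U ω ∧ V ω' = V ω ∧ W ω' = W ω) *
          pr p (fun ω' => W ω' = W ω)) /
        (pr p (fun ω' => U ω' = U ω ∧ W ω' = W ω) *
          pr p (fun ω' => V ω' = V ω ∧ W ω' = W ω)))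

-- The prefix `(X_0, …, X_{i-1})` of a random sequence `X`.
def prefixSeq {Ω 𝒳 : Type*} (X : Ω → ℕ → 𝒳) (i : ℕ) : Ω → (Fin i → 𝒳) :=
  fun ω j => X ω (j : ℕ)

-- Directed information `I(X^n → Y^n) = ∑_{i=1}^n I(X^i ; Y_i | Y^{i-1})` (0-indexed).
def directedInfo {Ω 𝒳 𝒴 : Type*} [Fintype Ω] (p : Ω → ℝ)
    (X : Ω → ℕ → 𝒳) (Y : Ω → ℕ → 𝒴) (n : ℕ) : ℝ :=
  ∑ i ∈ Finset.range n,
    condMutualInfo p (prefixSeq X (i + 1)) (fun ω => Y ω i) (prefixSeq Y i)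


/-!
Every quantity in the identity is the expectation of a log-ratio of the joint prefix
probabilities `J(a, b) = P(X^a = x^a, Y^b = y^b)` evaluated at the realised sample.
Pointwise, the `i`-th terms of `I(X^n → Y^n) + I(Y^n → X^n) - I(X^n → Y^n ‖ DX^n)` telescope to
`log J(n, n) - log J(n, 0) - log J(0, n) + log J(0, 0)`, and `J(0, 0) = 1`, which leaves the
integrand of `I(X^n ; Y^n)`. Samples of probability zero contribute nothing, so only logarithms
of positive numbers ever enter.
-/

lemma pr_congr {Ω : Type*} [Fintype Ω] (p : Ω → ℝ) {E F : Ω → Prop} (h : ∀ ω, E ω ↔ F ω) :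
    pr p E = pr p F := by
  rw [show E = F from funext fun ω => propext (h ω)]

lemma pr_of_forall {Ω : Type*} [Fintype Ω] (p : Ω → ℝ) {E : Ω → Prop} (h : ∀ ω, E ω) :
    pr p E = ∑ ω, p ω :=
  sum_congr rfl fun ω _ => if_pos (h ω)

lemma pr_pos {Ω : Type*} [Fintype Ω] {p : Ω → ℝ} (hp0 : ∀ ω, 0 ≤ p ω) {E : Ω → Prop} {ω : Ω}
    (hE : E ω) (hω : 0 < p ω) : 0 < pr p E := by
  classical
  calc 0 < p ω := hω
    _ = if E ω then p ω else 0 := (if_pos hE).symm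
    _ ≤ pr p E := single_le_sum (f := fun ω' => if E ω' then p ω' else 0)
        (fun ω' _ => by split_ifs <;> simp [hp0 ω']) (mem_univ ω)

@[simp]
lemma prefixSeq_zero {Ω 𝒳 : Type*} (X : Ω → ℕ → 𝒳) (ω : Ω) : prefixSeq X 0 ω = Fin.elim0 :=
  Subsingleton.elim _ _

lemma prefixSeq_succ_eq_iff {Ω 𝒳 : Type*} (X : Ω → ℕ → 𝒳) (i : ℕ) (ω' ω : Ω) :
    prefixSeq X (i + 1) ω' = prefixSeq X (i + 1) ω ↔
      X ω' i = X ω i ∧ prefixSeq X i ω' = prefixSeq X i ω := by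
  simp only [prefixSeq, funext_iff, Fin.forall_fin_succ', Fin.val_castSucc, Fin.val_last]
  exact and_comm

lemma Real.log_mul_div_mul {a b c d : ℝ} (ha : 0 < a) (hb : 0 < b) (hc : 0 < c) (hd : 0 < d) :
    Real.log (a * b / (c * d)) = Real.log a + Real.log b - Real.log c - Real.log d := by
  rw [Real.log_div (by positivity) (by positivity), Real.log_mul ha.ne' hb.ne',
    Real.log_mul hc.ne' hd.ne']
  ring

lemma sum_range_conservation (L : ℕ → ℕ → ℝ) (n : ℕ) :
    ∑ i ∈ range n, (L (i + 1) (i + 1) + L 0 i - L (i + 1) i - L 0 (i + 1)) +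
        ∑ i ∈ range n, (L (i + 1) (i + 1) + L i 0 - L i (i + 1) - L (i + 1) 0) =
      (L n n + L 0 0 - L n 0 - L 0 n) +
        ∑ i ∈ range n, (L (i + 1) (i + 1) + L i i - L (i + 1) i - L i (i + 1)) := by
  induction n with
  | zero => simp
  | succ n ih => simp only [sum_range_succ]; linarith

lemma sum_range_log_conservation {J : ℕ → ℕ → ℝ} (hJ : ∀ a b, 0 < J a b) (hJ00 : J 0 0 = 1)
    (n : ℕ) :
    ∑ i ∈ range n, Real.log (J (i + 1) (i + 1) * J 0 i / (J (i + 1) i * J 0 (i + 1))) +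
        ∑ i ∈ range n, Real.log (J (i + 1) (i + 1) * J i 0 / (J i (i + 1) * J (i + 1) 0)) =
      Real.log (J n n / (J n 0 * J 0 n)) +
        ∑ i ∈ range n, Real.log (J (i + 1) (i + 1) * J i i / (J (i + 1) i * J i (i + 1))) := by
  have h := sum_range_conservation (fun a b => Real.log (J a b)) n
  simp only [hJ00, Real.log_one, add_zero] at h
  simp only [Real.log_mul_div_mul (hJ _ _) (hJ _ _) (hJ _ _) (hJ _ _),
    Real.log_div (hJ _ _).ne' (mul_pos (hJ _ _) (hJ _ _)).ne',
    Real.log_mul (hJ _ _).ne' (hJ _ _).ne']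
  linarith

/-- `P(X^a = X^a(ω), Y^b = Y^b(ω))`. -/
def jointPrefixProb {Ω 𝒳 𝒴 : Type*} [Fintype Ω] (p : Ω → ℝ) (X : Ω → ℕ → 𝒳)
    (Y : Ω → ℕ → 𝒴) (ω : Ω) (a b : ℕ) : ℝ :=
  pr p fun ω' => prefixSeq X a ω' = prefixSeq X a ω ∧ prefixSeq Y b ω' = prefixSeq Y b ω

section jointPrefixProb

variable {Ω 𝒳 𝒴 : Type*} [Fintype Ω] (p : Ω → ℝ) (X : Ω → ℕ → 𝒳) (Y : Ω → ℕ → 𝒴)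

lemma jointPrefixProb_comm (ω : Ω) (a b : ℕ) :
    jointPrefixProb p Y X ω a b = jointPrefixProb p X Y ω b a :=
  pr_congr p fun _ => and_comm

lemma jointPrefixProb_zero_zero (hp1 : ∑ ω, p ω = 1) (ω : Ω) :
    jointPrefixProb p X Y ω 0 0 = 1 :=
  (pr_of_forall p fun _ => by simp).trans hp1

lemma jointPrefixProb_pos (hp0 : ∀ ω, 0 ≤ p ω) {ω : Ω} (hω : 0 < p ω) (a b : ℕ) :
    0 < jointPrefixProb p X Y ω a b :=
  pr_pos hp0 ⟨rfl, rfl⟩ hω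

lemma mutualInfo_prefixSeq (n : ℕ) :
    mutualInfo p (prefixSeq X n) (prefixSeq Y n) =
      ∑ ω, p ω * Real.log (jointPrefixProb p X Y ω n n /
        (jointPrefixProb p X Y ω n 0 * jointPrefixProb p X Y ω 0 n)) := by
  unfold mutualInfo jointPrefixProb
  congr! 7 <;> simp

lemma condMutualInfo_prefixSeq_succ (i : ℕ) :
    condMutualInfo p (prefixSeq X (i + 1)) (fun ω => Y ω i) (prefixSeq Y i) =
      ∑ ω, p ω * Real.log
        (jointPrefixProb p X Y ω (i + 1) (i + 1) * jointPrefixProb p X Y ω 0 i /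
          (jointPrefixProb p X Y ω (i + 1) i * jointPrefixProb p X Y ω 0 (i + 1))) := by
  unfold condMutualInfo jointPrefixProb
  congr! 7 <;> simp [prefixSeq_succ_eq_iff]

lemma condMutualInfo_instantaneous (i : ℕ) :
    condMutualInfo p (fun ω => X ω i) (fun ω => Y ω i)
        (fun ω => (prefixSeq X i ω, prefixSeq Y i ω)) =
      ∑ ω, p ω * Real.log
        (jointPrefixProb p X Y ω (i + 1) (i + 1) * jointPrefixProb p X Y ω i i /
          (jointPrefixProb p X Y ω (i + 1) i * jointPrefixProb p X Y ω i (i + 1))) := by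
  unfold condMutualInfo jointPrefixProb
  congr! 7 <;> simp [prefixSeq_succ_eq_iff] <;> tauto

end jointPrefixProb

theorem conservation_with_instantaneous_general
    {Ω 𝒳 𝒴 : Type*} [Fintype Ω]
    (p : Ω → ℝ) (hp0 : ∀ ω, 0 ≤ p ω) (hp1 : ∑ ω, p ω = 1)
    (X : Ω → ℕ → 𝒳) (Y : Ω → ℕ → 𝒴) (n : ℕ) :
    directedInfo p X Y n + directedInfo p Y X n =
      mutualInfo p (prefixSeq X n) (prefixSeq Y n) +
        ∑ i ∈ Finset.range n,
          condMutualInfo p (fun ω => X ω i) (fun ω => Y ω i)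
            (fun ω => (prefixSeq X i ω, prefixSeq Y i ω)) := by
  simp only [directedInfo, condMutualInfo_prefixSeq_succ, condMutualInfo_instantaneous,
    mutualInfo_prefixSeq, jointPrefixProb_comm p X Y]
  rw [sum_comm, sum_comm (s := range n), sum_comm (s := range n), ← sum_add_distrib,
    ← sum_add_distrib]
  refine sum_congr rfl fun ω _ => ?_
  rcases (hp0 ω).eq_or_lt with hω | hω
  · simp [← hω]
  simp only [← mul_sum, ← mul_add]
  exact congrArg _ <| sum_range_log_conservation (jointPrefixProb_pos p X Y hp0 hω)
    (jointPrefixProb_zero_zero p X Y hp1 ω) n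

/-- conservation law with instantaneous information:
`I(X^n→Y^n) + I(Y^n→X^n) = I(X^n; Y^n) + I(X^n→Y^n‖DX^n)`, where the
instantaneous information is `I(X^n→Y^n‖DX^n) = Σ_{i=1}^n I(X_i; Y_i | X^{i-1}, Y^{i-1})`. -/
theorem conservation_with_instantaneous
    {Ω 𝒳 𝒴 : Type*} [Fintype Ω] [Fintype 𝒳] [Fintype 𝒴]
    (p : Ω → ℝ) (hp0 : ∀ ω, 0 ≤ p ω) (hp1 : ∑ ω, p ω = 1)
    (X : Ω → ℕ → 𝒳) (Y : Ω → ℕ → 𝒴) (n : ℕ) :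
    directedInfo p X Y n + directedInfo p Y X n =
      mutualInfo p (prefixSeq X n) (prefixSeq Y n) +
        ∑ i ∈ Finset.range n,
          condMutualInfo p (fun ω => X ω i) (fun ω => Y ω i)
            (fun ω => (prefixSeq X i ω, prefixSeq Y i ω)) :=
  conservation_with_instantaneous_general p hp0 hp1 X Y n
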